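/- arXiv:2502.03874 — 8 statements merged into one kernel-verified Lean document; each statement's English description precedes it below -/
import Mathlib

section
/- No paradox with deterministic probabilities (Theorem 16): Let N ≥ 2 and let A_1, …, A_N be nonempty finite types with designated values v_i ∈ A_i. Suppose given probability mass functions p_i on A_i × A_{i+1} for i = 1, …, N−1 and q on A_1 × A_N whose marginals are pairwise consistent: for each 1 ≤ i ≤ N−2 the second marginal of p_i equals the first marginal of p_{i+1}; the first marginal of q equals the first marginal of p_1; and the second marginal of q equals the second marginal of p_{N−1}. Then it is impossible that simultaneously q assigns probability 1 to the event {(a, b) : a = v_1 and b ≠ v_N} and, for every i = 1, …, N−1, p_i assigns probability 0 to the event {(a, b) : a = v_i and b ≠ v_{i+1}}. -/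
/-!
Probability one means that the support is contained in the event, so certainty propagates along
the chain: if `a = v i` is certain under `p i` and the inference `a = v i → b = v (i+1)` fails
only on a null set, then `b = v (i+1)` is certain under `p i`, hence, by consistency of the
marginals, `a = v (i+1)` is certain under `p (i+1)`. Starting from `q` and returning to `q`,
both `b = v (M+1)` and `b ≠ v (M+1)` would be certain under `q`, which is impossible since a PMF
has nonempty support.
-/

/-- The probability that a PMF assigns to an event. -/
noncomputable def prob {α : Type*} (p : PMF α) (E : Set α) : ENNReal :=
  p.toOuterMeasure E

section Certain

variable {α : Type*} (p : PMF α) {E F : Set α}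

theorem prob_eq_one_of_subset (hE : prob p E = 1) (hEF : E ⊆ F) : prob p F = 1 :=
  (p.toOuterMeasure_apply_eq_one_iff F).2 <|
    ((p.toOuterMeasure_apply_eq_one_iff E).1 hE).trans hEF

theorem prob_eq_one_of_prob_diff_eq_zero (hE : prob p E = 1) (hEF : prob p (E \ F) = 0) :
    prob p F = 1 := by
  rw [prob, PMF.toOuterMeasure_apply_eq_one_iff] at hE ⊢
  rw [prob, PMF.toOuterMeasure_apply_eq_zero_iff] at hEF
  intro x hx
  by_contra hxF
  exact Set.disjoint_left.1 hEF hx ⟨hE hx, hxF⟩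

theorem not_disjoint_of_prob_eq_one (hE : prob p E = 1) (hF : prob p F = 1) :
    ¬Disjoint E F := by
  rw [prob, PMF.toOuterMeasure_apply_eq_one_iff] at hE hF
  obtain ⟨x, hx⟩ := p.support_nonempty
  exact Set.not_disjoint_iff.2 ⟨x, hE hx, hF hx⟩

end Certain

theorem prob_snd_eq_one_of_chain {M : ℕ} {A : ℕ → Type*} (v : ∀ i, A i)
    (p : ∀ i, PMF (A i × A (i + 1)))
    (hpp : ∀ i, i < M → ∀ b : A (i + 1),
      prob (p i) {x | x.2 = b} = prob (p (i + 1)) {x | x.1 = b})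
    (hzero : ∀ i, i ≤ M → prob (p i) {x | x.1 = v i ∧ x.2 ≠ v (i + 1)} = 0)
    (h0 : prob (p 0) {x | x.1 = v 0} = 1) :
    ∀ i, i ≤ M → prob (p i) {x | x.2 = v (i + 1)} = 1
  | 0, hi => prob_eq_one_of_prob_diff_eq_zero (p 0) h0 (hzero 0 hi)
  | i + 1, hi =>
    have hfst : prob (p (i + 1)) {x | x.1 = v (i + 1)} = 1 :=
      (hpp i hi _).symm.trans (prob_snd_eq_one_of_chain v p hpp hzero h0 i (by omega))
    prob_eq_one_of_prob_diff_eq_zero (p (i + 1)) hfst (hzero (i + 1) hi)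

/-- Here `N = M + 2`, the measurements are indexed `0, …, M` (so there are `N - 1` of them),
`p i` is the joint distribution on `A i × A (i+1)`, and `q` is the joint distribution
on `A 0 × A (M+1)` (the end points of the chain). -/
theorem no_paradox_with_deterministic_probabilities_general
    (M : ℕ) (A : ℕ → Type)
    (v : ∀ i, A i)
    (p : ∀ i, PMF (A i × A (i + 1)))
    (q : PMF (A 0 × A (M + 1)))
    (hpp : ∀ i, i < M → ∀ b : A (i + 1),
      prob (p i) {x | x.2 = b} = prob (p (i + 1)) {x | x.1 = b})
    (hq1 : ∀ a : A 0, prob q {x | x.1 = a} = prob (p 0) {x | x.1 = a})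
    (hq2 : ∀ b : A (M + 1), prob q {x | x.2 = b} = prob (p M) {x | x.2 = b})
    (hzero : ∀ i, i ≤ M → prob (p i) {x | x.1 = v i ∧ x.2 ≠ v (i + 1)} = 0) :
    prob q {x | x.1 = v 0 ∧ x.2 ≠ v (M + 1)} ≠ 1 := by
  intro hq
  have hq_fst : prob q {x | x.1 = v 0} = 1 := prob_eq_one_of_subset q hq fun _ hx => hx.1
  have hp_fst : prob (p 0) {x | x.1 = v 0} = 1 := (hq1 _).symm.trans hq_fst
  have hq_snd : prob q {x | x.2 = v (M + 1)} = 1 :=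
    (hq2 _).trans (prob_snd_eq_one_of_chain v p hpp hzero hp_fst M le_rfl)
  exact not_disjoint_of_prob_eq_one q hq hq_snd <|
    Set.disjoint_left.2 fun _ hx hx' => hx.2 hx'

/-- **No paradox with deterministic probabilities** (Theorem 16).
Here `N = M + 2`, the measurements are indexed `0, …, M` (so there are `N - 1` of them),
`p i` is the joint distribution on `A i × A (i+1)`, and `q` is the joint distribution
on `A 0 × A (M+1)` (the end points of the chain). -/
theorem no_paradox_with_deterministic_probabilities
    (M : ℕ) (A : ℕ → Type) [∀ i, Fintype (A i)] [∀ i, Nonempty (A i)]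
    (v : ∀ i, A i)
    (p : ∀ i, PMF (A i × A (i + 1)))
    (q : PMF (A 0 × A (M + 1)))
    (hpp : ∀ i, i < M → ∀ b : A (i + 1),
      prob (p i) {x | x.2 = b} = prob (p (i + 1)) {x | x.1 = b})
    (hq1 : ∀ a : A 0, prob q {x | x.1 = a} = prob (p 0) {x | x.1 = a})
    (hq2 : ∀ b : A (M + 1), prob q {x | x.2 = b} = prob (p M) {x | x.2 = b})
    (hzero : ∀ i, i ≤ M → prob (p i) {x | x.1 = v i ∧ x.2 ≠ v (i + 1)} = 0) :
    prob q {x | x.1 = v 0 ∧ x.2 ≠ v (M + 1)} ≠ 1 :=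
  no_paradox_with_deterministic_probabilities_general M A v p q hpp hq1 hq2 hzero
end

section
/- Post-selection free n-cycle paradox and extremal vertices (Theorem 18, probabilistic core): Let n ≥ 2 and let e : Fin n → PMF (Bool × Bool), where e i is interpreted as the joint distribution of the adjacent pair (x_i, x_{i+1 mod n}) in an n-cycle scenario. For each i define the correlator E_i := e_i(false,false) + e_i(true,true) − e_i(false,true) − e_i(true,false). Then the following are equivalent: (a) there exists v : Fin n → Bool such that for every i = 0, …, n−2 the support of e_i is contained in {(v_i, v_{i+1}), (¬v_i, ¬v_{i+1})}, and the support of e_{n−1} is contained in {(v_{n−1}, ¬v_0), (¬v_{n−1}, v_0)}; (b) for every i, E_i = 1 or E_i = −1, and the product ∏_{i=0}^{n−1} E_i = −1. -/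
/-!
Let `spin b = ±1` be the sign of a Boolean outcome. The correlator of `p` is the expectation of
`spin x * spin y`, a quantity bounded by `1`, so `correlator p = spin u * spin w` forces all the
mass of `p` onto the two pairs `(x, y)` with `spin x * spin y = spin u * spin w`, i.e. onto
`{(u, w), (¬u, ¬w)}`. Condition (a) thus says that the correlators are `spin vᵢ * spin vᵢ₊₁`,
with the sign flipped on the closing edge; their product telescopes to `-1`. Conversely, when the
correlators are `±1` with product `-1`, their partial products give the assignment `v`.
-/

/-- The correlator `<X_i, X_{i+1}> = P(x_i = x_{i+1}) - P(x_i ≠ x_{i+1})` of a joint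
distribution of two binary outcomes. -/
noncomputable def correlator (p : PMF (Bool × Bool)) : ℝ :=
  (p (false, false)).toReal + (p (true, true)).toReal
    - (p (false, true)).toReal - (p (true, false)).toReal

open Finset

theorem PMF.sum_toReal {α : Type*} [Fintype α] (p : PMF α) : ∑ x, (p x).toReal = 1 := by
  rw [← ENNReal.toReal_sum fun x _ ↦ p.apply_ne_top x, ← tsum_fintype (L := .unconditional α),
    p.tsum_coe, ENNReal.toReal_one]

theorem PMF.sum_toReal_mul_eq_one_iff {α : Type*} [Fintype α] (p : PMF α) {f : α → ℝ}
    (hf : ∀ x, f x ≤ 1) : ∑ x, (p x).toReal * f x = 1 ↔ ∀ x ∈ p.support, f x = 1 := by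
  have hdefect : ∑ x, (p x).toReal * f x = 1 - ∑ x, (p x).toReal * (1 - f x) := by
    simp only [mul_sub, mul_one, sum_sub_distrib, p.sum_toReal, sub_sub_cancel]
  have hnonneg : ∀ x ∈ univ, 0 ≤ (p x).toReal * (1 - f x) := fun x _ ↦
    mul_nonneg ENNReal.toReal_nonneg (sub_nonneg.2 (hf x))
  rw [hdefect, sub_eq_self, sum_eq_zero_iff_of_nonneg hnonneg]
  refine forall_congr' fun x ↦ ?_
  simp only [mem_univ, true_imp_iff, mul_eq_zero, ENNReal.toReal_eq_zero_iff, p.apply_ne_top,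
    or_false, sub_eq_zero, eq_comm (a := (1 : ℝ)), PMF.mem_support_iff]
  exact or_iff_not_imp_left

noncomputable def spin (b : Bool) : ℝ := if b then -1 else 1

@[simp] theorem spin_not (b : Bool) : spin (!b) = -spin b := by cases b <;> simp [spin]

@[simp] theorem spin_mul_self (b : Bool) : spin b * spin b = 1 := by cases b <;> simp [spin]

theorem spin_mul_spin_eq_one_or (u w : Bool) : spin u * spin w = 1 ∨ spin u * spin w = -1 := by
  cases u <;> cases w <;> simp [spin]

theorem exists_spin_eq_iff {x : ℝ} : (∃ b, spin b = x) ↔ x = 1 ∨ x = -1 := by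
  constructor
  · rintro ⟨_ | _, rfl⟩ <;> simp [spin]
  · rintro (rfl | rfl)
    exacts [⟨false, rfl⟩, ⟨true, rfl⟩]

theorem correlator_eq_sum_spin (p : PMF (Bool × Bool)) :
    correlator p = ∑ x, (p x).toReal * (spin x.1 * spin x.2) := by
  simp only [correlator, Fintype.sum_prod_type, Fintype.sum_bool, spin]
  norm_num
  ring

theorem spin_mul_spin_eq_one_iff (u w a b : Bool) :
    spin u * spin w * (spin a * spin b) = 1 ↔
      (a, b) ∈ ({(u, w), (!u, !w)} : Set (Bool × Bool)) := by
  cases u <;> cases w <;> cases a <;> cases b <;> norm_num [spin]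

theorem support_subset_iff_correlator_eq (p : PMF (Bool × Bool)) (u w : Bool) :
    p.support ⊆ {(u, w), (!u, !w)} ↔ correlator p = spin u * spin w := by
  have hsq : spin u * spin w * (spin u * spin w) = 1 := by
    rw [mul_mul_mul_comm, spin_mul_self, spin_mul_self, one_mul]
  have hle : ∀ x : Bool × Bool, spin u * spin w * (spin x.1 * spin x.2) ≤ 1 := by
    rintro ⟨a, b⟩
    cases u <;> cases w <;> cases a <;> cases b <;> norm_num [spin]
  calc p.support ⊆ {(u, w), (!u, !w)}
      ↔ ∀ x ∈ p.support, spin u * spin w * (spin x.1 * spin x.2) = 1 := by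
        simp only [Set.subset_def, spin_mul_spin_eq_one_iff]
    _ ↔ spin u * spin w * correlator p = 1 := by
        rw [← p.sum_toReal_mul_eq_one_iff hle, correlator_eq_sum_spin, mul_sum]
        simp only [mul_left_comm]
    _ ↔ correlator p = spin u * spin w := by
        constructor <;> intro h
        · rw [← one_mul (correlator p), ← hsq, mul_assoc, h, mul_one]
        · rw [h, hsq]

theorem support_subset_anti_iff_correlator_eq (p : PMF (Bool × Bool)) (u w : Bool) :
    p.support ⊆ {(u, !w), (!u, w)} ↔ correlator p = -(spin u * spin w) := by
  simpa using support_subset_iff_correlator_eq p u (!w)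

theorem Fin.prod_castSucc_mul_succ_of_mul_self {M : Type*} [CommMonoid M] {m : ℕ}
    (s : Fin (m + 1) → M) (hs : ∀ i, s i * s i = 1) :
    ∏ i : Fin m, s i.castSucc * s i.succ = s 0 * s (Fin.last m) := by
  have hS : (∏ i, s i) * ∏ i, s i = 1 := by
    rw [← prod_mul_distrib, prod_congr rfl fun i _ ↦ hs i, prod_const_one]
  calc ∏ i : Fin m, s i.castSucc * s i.succ
      = (∏ i : Fin m, s i.castSucc) * (∏ i : Fin m, s i.succ) * (s 0 * s 0)
          * (s (Fin.last m) * s (Fin.last m)) := by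
        rw [prod_mul_distrib, hs, hs, mul_one, mul_one]
    _ = ((∏ i : Fin m, s i.castSucc) * s (Fin.last m)) * (s 0 * ∏ i : Fin m, s i.succ)
          * (s 0 * s (Fin.last m)) := by
        ac_rfl
    _ = s 0 * s (Fin.last m) := by
        rw [← Fin.prod_univ_castSucc, ← Fin.prod_univ_succ, hS, one_mul]

theorem prod_eq_neg_one_of_twisted_spin_cycle {n : ℕ} (hn : 0 < n) {c : Fin n → ℝ}
    {v : Fin n → Bool}
    (hopen : ∀ i : Fin n, ∀ h : (i : ℕ) + 1 < n, c i = spin (v i) * spin (v ⟨i + 1, h⟩))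
    (hclose : ∀ i : Fin n, (i : ℕ) + 1 = n → c i = -(spin (v i) * spin (v ⟨0, hn⟩))) :
    ∏ i, c i = -1 := by
  obtain ⟨m, rfl⟩ : ∃ m, n = m + 1 := ⟨n - 1, by omega⟩
  have hstep (i : Fin m) : c i.castSucc = spin (v i.castSucc) * spin (v i.succ) :=
    hopen i.castSucc (by simp)
  have hlast : c (Fin.last m) = -(spin (v (Fin.last m)) * spin (v 0)) :=
    hclose (Fin.last m) rfl
  rw [Fin.prod_univ_castSucc, prod_congr rfl fun i _ ↦ hstep i, hlast,
    Fin.prod_castSucc_mul_succ_of_mul_self (fun i ↦ spin (v i)) fun i ↦ spin_mul_self (v i)]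
  linear_combination (-(spin (v 0) * spin (v 0))) * spin_mul_self (v (Fin.last m)) -
    spin_mul_self (v 0)

theorem Fin.partialProd_last {M : Type*} [CommMonoid M] {n : ℕ} (f : Fin n → M) :
    Fin.partialProd f (Fin.last n) = ∏ i, f i := by
  rw [Fin.partialProd, Fin.val_last, List.take_of_length_le (by simp), List.prod_ofFn]

theorem exists_twisted_spin_cycle_of_prod_eq_neg_one {n : ℕ} {c : Fin n → ℝ}
    (hc : ∀ i, c i = 1 ∨ c i = -1) (hprod : ∏ i, c i = -1) :
    ∃ v : Fin n → Bool,
      (∀ i : Fin n, ∀ h : (i : ℕ) + 1 < n, c i = spin (v i) * spin (v ⟨i + 1, h⟩)) ∧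
      (∀ i : Fin n, ∀ h : (i : ℕ) + 1 = n, c i = -(spin (v i) * spin (v ⟨0, by omega⟩))) := by
  obtain ⟨P, hP0, hPsucc, hPlast⟩ : ∃ P : Fin (n + 1) → ℝ, P 0 = 1 ∧
      (∀ j, P j.succ = P j.castSucc * c j) ∧ P (Fin.last n) = -1 :=
    ⟨Fin.partialProd c, Fin.partialProd_zero c, Fin.partialProd_succ c,
      (Fin.partialProd_last c).trans hprod⟩
  have hP (j : Fin (n + 1)) : P j = 1 ∨ P j = -1 := by
    induction j using Fin.induction with
    | zero => exact .inl hP0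
    | succ j ih => rcases ih with h | h <;> rcases hc j with h' | h' <;> simp [hPsucc, h, h']
  have hPsq (j : Fin (n + 1)) : P j * P j = 1 := by rcases hP j with h | h <;> simp [h]
  have hedge (i : Fin n) : c i = P i.castSucc * P i.succ := by
    rw [hPsucc, ← mul_assoc, hPsq, one_mul]
  choose v hv using fun i : Fin n ↦ exists_spin_eq_iff.2 (hP i.castSucc)
  refine ⟨v, fun i h ↦ ?_, fun i h ↦ ?_⟩
  · rw [hv, hv, hedge]
    rfl
  · have hsucc : i.succ = Fin.last n := Fin.ext (by simp [h])
    have hzero : (⟨0, by omega⟩ : Fin n).castSucc = 0 := rfl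
    rw [hv, hv, hedge, hsucc, hPlast, hzero, hP0, mul_one, mul_neg_one]

theorem exists_twisted_spin_cycle_iff {n : ℕ} (hn : 0 < n) (c : Fin n → ℝ) :
    (∃ v : Fin n → Bool,
      (∀ i : Fin n, ∀ h : (i : ℕ) + 1 < n, c i = spin (v i) * spin (v ⟨i + 1, h⟩)) ∧
      (∀ i : Fin n, (i : ℕ) + 1 = n → c i = -(spin (v i) * spin (v ⟨0, hn⟩)))) ↔
      (∀ i, c i = 1 ∨ c i = -1) ∧ ∏ i, c i = -1 := by
  refine ⟨fun ⟨v, hopen, hclose⟩ ↦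
      ⟨fun i ↦ ?_, prod_eq_neg_one_of_twisted_spin_cycle hn hopen hclose⟩,
    fun ⟨hc, hprod⟩ ↦ exists_twisted_spin_cycle_of_prod_eq_neg_one hc hprod⟩
  rcases Nat.lt_or_eq_of_le i.isLt with h | h
  · rw [hopen i h]
    exact spin_mul_spin_eq_one_or _ _
  · rw [hclose i h, neg_eq_iff_eq_neg, neg_eq_iff_eq_neg, neg_neg]
    exact (spin_mul_spin_eq_one_or _ _).symm

/-- **Post-selection free `n`-cycle paradox and extremal vertices** (Theorem 18,
probabilistic core).  `e i` is the joint distribution of the adjacent pair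
`(x_i, x_{i+1 mod n})`.  Condition (a): there is a Boolean assignment `v` such that
each non-closing edge is supported on `{(v_i, v_{i+1}), (¬v_i, ¬v_{i+1})}` and the
closing edge is supported on `{(v_{n-1}, ¬v_0), (¬v_{n-1}, v_0)}`.  Condition (b):
every correlator is `±1` and their product is `-1`. -/
theorem postselection_free_ncycle_paradox_iff_extremal_vertex
    (n : ℕ) (hn : 2 ≤ n) (e : Fin n → PMF (Bool × Bool)) :
    (∃ v : Fin n → Bool,
        (∀ i : Fin n, ∀ h : (i : ℕ) + 1 < n,
          (e i).support ⊆ {(v i, v ⟨(i : ℕ) + 1, h⟩), (!(v i), !(v ⟨(i : ℕ) + 1, h⟩))}) ∧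
        (∀ i : Fin n, (i : ℕ) + 1 = n →
          (e i).support ⊆ {(v i, !(v ⟨0, by omega⟩)), (!(v i), v ⟨0, by omega⟩)})) ↔
      ((∀ i, correlator (e i) = 1 ∨ correlator (e i) = -1) ∧
        (∏ i, correlator (e i)) = -1) := by
  simp only [support_subset_iff_correlator_eq, support_subset_anti_iff_correlator_eq]
  exact exists_twisted_spin_cycle_iff (by omega) fun i ↦ correlator (e i)
end

section
/- Chain reduction (Theorem 19): Let n be a nonempty finite type, let ρ, A, B, C ∈ Matrix n n ℂ, where ρ is positive semidefinite and A, B, C are orthogonal projections (Hermitian idempotents) that pairwise commute: A*B = B*A, B*C = C*B, A*C = C*A. If Tr(B * C * ρ) = Tr(C * ρ) and Tr(A * B * ρ) = Tr(B * ρ), then Tr(A * C * ρ) = Tr(C * ρ). -/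
/-!
For commuting projections `P`, `Q`, the matrix `Q - P * Q` is again a projection, so the inference
`Tr(P Q ρ) = Tr(Q ρ)` says `Tr((Q - P Q) ρ) = 0`. For a state `ρ = S† S` this trace is
`‖S (Q - P Q)‖²` (Frobenius norm), hence the inference holds at the level of matrices:
`P Q ρ = Q ρ`. Matrix identities of this kind chain by commuting the projections past each other.
-/

open Matrix
open scoped ComplexOrder

open scoped MatrixOrder in
theorem Matrix.PosSemidef.mul_eq_zero_of_trace_mul_eq_zero {n 𝕜 : Type*} [Fintype n] [RCLike 𝕜]
    {ρ P : Matrix n n 𝕜} (hρ : ρ.PosSemidef) (hP : IsStarProjection P)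
    (h : (P * ρ).trace = 0) : P * ρ = 0 := by
  classical
  obtain ⟨S, rfl⟩ := CStarAlgebra.nonneg_iff_eq_star_mul_self.mp hρ.nonneg
  rw [star_eq_conjTranspose] at h ⊢
  have hPh : Pᴴ = P := hP.isSelfAdjoint
  have hSP : S * P = 0 := by
    rw [← trace_conjTranspose_mul_self_eq_zero_iff, ← h]
    calc ((S * P)ᴴ * (S * P)).trace = (P * Sᴴ * S * P).trace := by
          rw [conjTranspose_mul, hPh]; simp only [Matrix.mul_assoc]
      _ = (P * P * (Sᴴ * S)).trace := by
          rw [trace_mul_comm]; simp only [Matrix.mul_assoc]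
      _ = (P * (Sᴴ * S)).trace := by rw [hP.isIdempotentElem.eq]
  calc P * (Sᴴ * S) = (S * P)ᴴ * S := by rw [conjTranspose_mul, hPh, Matrix.mul_assoc]
    _ = 0 := by rw [hSP, conjTranspose_zero, Matrix.zero_mul]

theorem IsStarProjection.sub_mul_of_commute {R : Type*} [NonUnitalRing R] [StarRing R] {p q : R}
    (hp : IsStarProjection p) (hq : IsStarProjection q) (hpq : Commute p q) :
    IsStarProjection (q - p * q) :=
  (hp.mul hq hpq).sub_of_mul_eq_left hq (by rw [mul_assoc, hq.isIdempotentElem.eq])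

theorem Matrix.PosSemidef.mul_mul_eq_of_trace_mul_mul_eq {n 𝕜 : Type*} [Fintype n] [RCLike 𝕜]
    {ρ P Q : Matrix n n 𝕜} (hρ : ρ.PosSemidef) (hP : IsStarProjection P)
    (hQ : IsStarProjection Q) (hPQ : Commute P Q) (h : (P * Q * ρ).trace = (Q * ρ).trace) :
    P * Q * ρ = Q * ρ := by
  have hzero := hρ.mul_eq_zero_of_trace_mul_eq_zero (hP.sub_mul_of_commute hQ hPQ)
    (by rw [Matrix.sub_mul, trace_sub, h, sub_self])
  rwa [Matrix.sub_mul, sub_eq_zero, eq_comm] at hzero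

theorem mul_mul_eq_trans_of_commute {R : Type*} [Semigroup R] {a b c r : R}
    (hac : Commute a c) (hbc : Commute b c)
    (hcb : b * c * r = c * r) (hba : a * b * r = b * r) : a * c * r = c * r := by
  simp only [mul_assoc] at hcb hba ⊢
  calc a * (c * r) = a * (b * (c * r)) := by rw [hcb]
    _ = a * (c * (b * r)) := by rw [← mul_assoc b, hbc.eq, mul_assoc]
    _ = c * (a * (b * r)) := by rw [← mul_assoc a, hac.eq, mul_assoc]
    _ = c * r := by rw [hba, ← mul_assoc, ← hbc.eq, mul_assoc, hcb]

theorem chain_reduction_general {n : Type*} [Fintype n]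
    (ρ A B C : Matrix n n ℂ) (hρ : ρ.PosSemidef)
    (hAh : Aᴴ = A) (hA2 : A * A = A)
    (hBh : Bᴴ = B) (hB2 : B * B = B)
    (hCh : Cᴴ = C) (hC2 : C * C = C)
    (hAB : A * B = B * A) (hBC : B * C = C * B) (hAC : A * C = C * A)
    (h1 : (B * C * ρ).trace = (C * ρ).trace)
    (h2 : (A * B * ρ).trace = (B * ρ).trace) :
    (A * C * ρ).trace = (C * ρ).trace := by
  have hA : IsStarProjection A := ⟨hA2, hAh⟩
  have hB : IsStarProjection B := ⟨hB2, hBh⟩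
  have hC : IsStarProjection C := ⟨hC2, hCh⟩
  have hCB : B * C * ρ = C * ρ := hρ.mul_mul_eq_of_trace_mul_mul_eq hB hC hBC h1
  have hBA : A * B * ρ = B * ρ := hρ.mul_mul_eq_of_trace_mul_mul_eq hA hB hAB h2
  rw [mul_mul_eq_trans_of_commute hAC hBC hCB hBA]

/-- **Chain reduction** (Theorem 19). For pairwise commuting orthogonal projections
`A`, `B`, `C` and a positive semidefinite state `ρ`, the inferences
`Tr(BCρ) = Tr(Cρ)` (outcome `C` implies outcome `B`) and `Tr(ABρ) = Tr(Bρ)`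
(outcome `B` implies outcome `A`) imply `Tr(ACρ) = Tr(Cρ)`. -/
theorem chain_reduction {n : Type*} [Fintype n] [DecidableEq n] [Nonempty n]
    (ρ A B C : Matrix n n ℂ) (hρ : ρ.PosSemidef)
    (hAh : Aᴴ = A) (hA2 : A * A = A)
    (hBh : Bᴴ = B) (hB2 : B * B = B)
    (hCh : Cᴴ = C) (hC2 : C * C = C)
    (hAB : A * B = B * A) (hBC : B * C = C * B) (hAC : A * C = C * A)
    (h1 : (B * C * ρ).trace = (C * ρ).trace)
    (h2 : (A * B * ρ).trace = (B * ρ).trace) :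
    (A * C * ρ).trace = (C * ρ).trace :=
  chain_reduction_general ρ A B C hρ hAh hA2 hBh hB2 hCh hC2 hAB hBC hAC h1 h2
end

section
/- Symmetric chain reduction (Theorem 21): Let n be a nonempty finite type, N ≥ 2, and let π_1, …, π_N ∈ Matrix n n ℂ be orthogonal projections such that each cyclically adjacent pair commutes: π_i * π_{i+1} = π_{i+1} * π_i for i = 1, …, N−1 and π_N * π_1 = π_1 * π_N (no commutation is assumed for non-adjacent pairs). Let ρ ∈ Matrix n n ℂ be positive semidefinite. If for every i = 1, …, N−1 one has Tr(π_i * π_{i+1} * ρ) = Tr(π_i * ρ) = Tr(π_{i+1} * ρ), then Tr(π_1 * π_N * ρ) = Tr(π_1 * ρ) = Tr(π_N * ρ). -/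
open Matrix
open scoped ComplexOrder

/-!
Two-way inference between commuting projections `P`, `Q` in a state `ρ` forces `P ρ = Q ρ`:
`P (1 - Q)` is again a projection and carries zero weight `Tr(P ρ) - Tr(P Q ρ)` in `ρ`, and a
projection of zero weight annihilates a positive semidefinite matrix, so `P ρ = P Q ρ`;
symmetrically `Q ρ = Q P ρ = P Q ρ`. Along the chain this gives `π_i ρ = π_0 ρ` for every `i`,
and the inference between the end points follows from `π_0 π_{N-1} ρ = π_0 π_0 ρ = π_0 ρ`.
-/

namespace Matrix.PosSemidef

variable {n 𝕜 : Type*} [Fintype n] [RCLike 𝕜] {ρ P Q : Matrix n n 𝕜}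

theorem mul_eq_zero_of_isStarProjection_of_trace_mul_eq_zero (hρ : ρ.PosSemidef)
    (hP : IsStarProjection P) (h : (P * ρ).trace = 0) : P * ρ = 0 := by
  classical
  open scoped MatrixOrder in
  obtain ⟨B, rfl⟩ := CStarAlgebra.nonneg_iff_eq_star_mul_self.mp hρ.nonneg
  have hPstar : Pᴴ = P := hP.isSelfAdjoint
  have hBP : B * P = 0 := by
    rw [← trace_conjTranspose_mul_self_eq_zero_iff, ← h]
    calc ((B * P)ᴴ * (B * P)).trace = (P * (star B * B) * P).trace := by
          rw [conjTranspose_mul, hPstar, star_eq_conjTranspose]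
          simp only [Matrix.mul_assoc]
      _ = (P * P * (star B * B)).trace := by rw [trace_mul_comm, ← Matrix.mul_assoc]
      _ = (P * (star B * B)).trace := by rw [hP.isIdempotentElem.eq]
  calc P * (star B * B) = (B * P)ᴴ * B := by
        rw [conjTranspose_mul, hPstar, star_eq_conjTranspose, Matrix.mul_assoc]
    _ = 0 := by rw [hBP, conjTranspose_zero, Matrix.zero_mul]

theorem mul_mul_eq_mul_of_trace_eq (hρ : ρ.PosSemidef) (hP : IsStarProjection P)
    (hQ : IsStarProjection Q) (hPQ : Commute P Q) (h : (P * Q * ρ).trace = (P * ρ).trace) :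
    P * Q * ρ = P * ρ := by
  classical
  have hproj : IsStarProjection (P * (1 - Q)) :=
    hP.mul hQ.one_sub ((Commute.one_right P).sub_right hPQ)
  have hzero : P * (1 - Q) * ρ = 0 := by
    refine hρ.mul_eq_zero_of_isStarProjection_of_trace_mul_eq_zero hproj ?_
    rw [mul_sub, mul_one, Matrix.sub_mul, trace_sub, h, sub_self]
  rw [mul_sub, mul_one, Matrix.sub_mul, sub_eq_zero] at hzero
  exact hzero.symm

theorem mul_eq_mul_of_trace_eq (hρ : ρ.PosSemidef) (hP : IsStarProjection P)
    (hQ : IsStarProjection Q) (hPQ : Commute P Q)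
    (hPQρ : (P * Q * ρ).trace = (P * ρ).trace) (hPρ : (P * ρ).trace = (Q * ρ).trace) :
    P * ρ = Q * ρ := by
  have hQPρ : (Q * P * ρ).trace = (Q * ρ).trace := by rw [← hPQ.eq, hPQρ, hPρ]
  calc P * ρ = P * Q * ρ := (hρ.mul_mul_eq_mul_of_trace_eq hP hQ hPQ hPQρ).symm
    _ = Q * P * ρ := by rw [hPQ.eq]
    _ = Q * ρ := hρ.mul_mul_eq_mul_of_trace_eq hQ hP hPQ.symm hQPρ

end Matrix.PosSemidef

theorem symmetric_chain_reduction_general {n : Type*} [Fintype n]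
    (N : ℕ) (hN : 2 ≤ N) (π : ℕ → Matrix n n ℂ) (ρ : Matrix n n ℂ)
    (hρ : ρ.PosSemidef)
    (hproj : ∀ i, i < N → (π i)ᴴ = π i ∧ π i * π i = π i)
    (hcomm : ∀ i, i + 1 < N → π i * π (i + 1) = π (i + 1) * π i)
    (htr : ∀ i, i + 1 < N →
      (π i * π (i + 1) * ρ).trace = (π i * ρ).trace ∧
      (π i * ρ).trace = (π (i + 1) * ρ).trace) :
    (π 0 * π (N - 1) * ρ).trace = (π 0 * ρ).trace ∧
    (π 0 * ρ).trace = (π (N - 1) * ρ).trace := by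
  have hπ : ∀ i, i < N → IsStarProjection (π i) := fun i hi => ⟨(hproj i hi).2, (hproj i hi).1⟩
  have hchain : ∀ i, i < N → π i * ρ = π 0 * ρ := by
    intro i
    induction i with
    | zero => intro _; rfl
    | succ i ih =>
      intro hi
      rw [← ih (by omega)]
      exact (hρ.mul_eq_mul_of_trace_eq (hπ i (by omega)) (hπ (i + 1) hi) (hcomm i hi)
        (htr i hi).1 (htr i hi).2).symm
  have hlast : π (N - 1) * ρ = π 0 * ρ := hchain (N - 1) (by omega)
  have hends : π 0 * π (N - 1) * ρ = π 0 * ρ := by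
    rw [Matrix.mul_assoc, hlast, ← Matrix.mul_assoc, (hπ 0 (by omega)).isIdempotentElem.eq]
  exact ⟨by rw [hends], by rw [hlast]⟩

/-- **Symmetric chain reduction** (Theorem 21). The projections are indexed
`0, …, N-1`.  Each cyclically adjacent pair commutes, and each adjacent pair of
Born probabilities encodes a two-way inference
`Tr(π_i π_{i+1} ρ) = Tr(π_i ρ) = Tr(π_{i+1} ρ)`.  Then the same holds for the
end points: `Tr(π_0 π_{N-1} ρ) = Tr(π_0 ρ) = Tr(π_{N-1} ρ)`. -/
theorem symmetric_chain_reduction {n : Type*} [Fintype n] [DecidableEq n] [Nonempty n]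
    (N : ℕ) (hN : 2 ≤ N) (π : ℕ → Matrix n n ℂ) (ρ : Matrix n n ℂ)
    (hρ : ρ.PosSemidef)
    (hproj : ∀ i, i < N → (π i)ᴴ = π i ∧ π i * π i = π i)
    (hcomm : ∀ i, i + 1 < N → π i * π (i + 1) = π (i + 1) * π i)
    (hcomm' : π (N - 1) * π 0 = π 0 * π (N - 1))
    (htr : ∀ i, i + 1 < N →
      (π i * π (i + 1) * ρ).trace = (π i * ρ).trace ∧
      (π i * ρ).trace = (π (i + 1) * ρ).trace) :
    (π 0 * π (N - 1) * ρ).trace = (π 0 * ρ).trace ∧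
    (π 0 * ρ).trace = (π (N - 1) * ρ).trace :=
  symmetric_chain_reduction_general N hN π ρ hρ hproj hcomm htr
end

section
/- No symmetric quantum paradoxes (Corollary 22): Let n be a nonempty finite type, N ≥ 2, and let π_1, …, π_N ∈ Matrix n n ℂ be orthogonal projections such that each cyclically adjacent pair commutes: π_i * π_{i+1} = π_{i+1} * π_i for i = 1, …, N−1 and π_N * π_1 = π_1 * π_N. Let ρ ∈ Matrix n n ℂ be positive semidefinite and assume for every i = 1, …, N−1 that Tr(π_i * π_{i+1} * ρ) = Tr(π_i * ρ) = Tr(π_{i+1} * ρ). Then Tr(π_1 * (1 − π_N) * ρ) = 0; in particular it is impossible to additionally have Tr(π_1 * (1 − π_N) * ρ) ≠ 0, so a multi-agent paradox based on such a symmetric inference chain together with a nonzero end-point probability P(a_1 = v_1, a_N = ¬v_N) > 0 cannot arise in quantum theory. -/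
/-!
If `P` and `Q` are commuting projections with `Tr(PQρ) = Tr(Pρ)`, then `P(1 - Q)` is a
projection of zero weight in the state `ρ`, and a projection `E` with `Tr(Eρ) = 0` satisfies
`Eρ = 0` (write `ρ = BᴴB`; then `Tr(Eρ) = Tr((EBᴴ)ᴴ(EBᴴ))`). Hence `PQρ = Pρ`, and by symmetry
`Pρ = PQρ = QPρ = Qρ`: each two-way inference identifies `π_i ρ` with `π_{i+1} ρ`. Along the chain
`π_0 ρ = π_{N-1} ρ`, so `π_0 (1 - π_{N-1}) ρ = π_0 ρ - π_0 π_0 ρ = 0`.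
-/

open Matrix
open scoped ComplexOrder

namespace Matrix

open scoped MatrixOrder

variable {n 𝕜 : Type*} [Fintype n] [RCLike 𝕜] {P Q ρ : Matrix n n 𝕜}

theorem mul_eq_zero_of_isStarProjection_of_trace_eq_zero (hP : IsStarProjection P)
    (hρ : ρ.PosSemidef) (h : (P * ρ).trace = 0) : P * ρ = 0 := by
  classical
  obtain ⟨B, rfl⟩ := CStarAlgebra.nonneg_iff_eq_star_mul_self.mp hρ.nonneg
  rw [star_eq_conjTranspose] at h ⊢
  have hPB : P * Bᴴ = 0 := by
    rw [← trace_conjTranspose_mul_self_eq_zero_iff, ← h, conjTranspose_mul,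
      conjTranspose_conjTranspose, ← star_eq_conjTranspose P, hP.isSelfAdjoint.star_eq,
      Matrix.mul_assoc, ← Matrix.mul_assoc P, hP.isIdempotentElem.eq, trace_mul_comm,
      Matrix.mul_assoc]
  rw [← Matrix.mul_assoc, hPB, Matrix.zero_mul]

variable [DecidableEq n]

theorem mul_mul_eq_mul_of_trace_eq (hP : IsStarProjection P) (hQ : IsStarProjection Q)
    (hPQ : Commute P Q) (hρ : ρ.PosSemidef) (h : (P * Q * ρ).trace = (P * ρ).trace) :
    P * Q * ρ = P * ρ := by
  have hdiff : P * (1 - Q) * ρ = P * ρ - P * Q * ρ := by noncomm_ring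
  have hzero := mul_eq_zero_of_isStarProjection_of_trace_eq_zero (hP.mul hQ.one_sub
    ((Commute.one_right P).sub_right hPQ)) hρ (by rw [hdiff, trace_sub, h, sub_self])
  rw [hdiff, sub_eq_zero] at hzero
  exact hzero.symm

theorem mul_eq_mul_of_trace_eq (hP : IsStarProjection P) (hQ : IsStarProjection Q)
    (hPQ : Commute P Q) (hρ : ρ.PosSemidef) (h₁ : (P * Q * ρ).trace = (P * ρ).trace)
    (h₂ : (P * ρ).trace = (Q * ρ).trace) : P * ρ = Q * ρ := by
  have h₁' : (Q * P * ρ).trace = (Q * ρ).trace := by rw [← hPQ.eq, h₁, h₂]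
  rw [← mul_mul_eq_mul_of_trace_eq hP hQ hPQ hρ h₁,
    ← mul_mul_eq_mul_of_trace_eq hQ hP hPQ.symm hρ h₁', hPQ.eq]

end Matrix

theorem no_symmetric_quantum_paradoxes_general {n : Type*} [Fintype n] [DecidableEq n]
    (N : ℕ) (hN : 2 ≤ N) (π : ℕ → Matrix n n ℂ) (ρ : Matrix n n ℂ)
    (hρ : ρ.PosSemidef)
    (hproj : ∀ i, i < N → (π i)ᴴ = π i ∧ π i * π i = π i)
    (hcomm : ∀ i, i + 1 < N → π i * π (i + 1) = π (i + 1) * π i)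
    (htr : ∀ i, i + 1 < N →
      (π i * π (i + 1) * ρ).trace = (π i * ρ).trace ∧
      (π i * ρ).trace = (π (i + 1) * ρ).trace) :
    (π 0 * (1 - π (N - 1)) * ρ).trace = 0 := by
  have hstar (i : ℕ) (hi : i < N) : IsStarProjection (π i) := ⟨(hproj i hi).2, (hproj i hi).1⟩
  have chain : ∀ i, i < N → π 0 * ρ = π i * ρ := by
    intro i
    induction i with
    | zero => exact fun _ ↦ rfl
    | succ i ih =>
      intro hi
      rw [ih (by omega), mul_eq_mul_of_trace_eq (hstar i (by omega)) (hstar (i + 1) hi)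
        (hcomm i hi) hρ (htr i hi).1 (htr i hi).2]
  have hend : π 0 * (1 - π (N - 1)) * ρ = 0 := by
    rw [Matrix.mul_sub, Matrix.mul_one, Matrix.sub_mul, Matrix.mul_assoc,
      ← chain (N - 1) (by omega), ← Matrix.mul_assoc, (hproj 0 (by omega)).2, sub_self]
  rw [hend, trace_zero]

/-- **No symmetric quantum paradoxes** (Corollary 22). The projections are indexed
`0, …, N-1`.  Under the hypotheses of symmetric chain reduction, the end-point
probability `P(a_1 = v_1, a_N = ¬v_N) = Tr(π_0 (1 - π_{N-1}) ρ)` vanishes, so a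
multi-agent paradox based on such a symmetric inference chain cannot arise in
quantum theory. -/
theorem no_symmetric_quantum_paradoxes {n : Type*} [Fintype n] [DecidableEq n] [Nonempty n]
    (N : ℕ) (hN : 2 ≤ N) (π : ℕ → Matrix n n ℂ) (ρ : Matrix n n ℂ)
    (hρ : ρ.PosSemidef)
    (hproj : ∀ i, i < N → (π i)ᴴ = π i ∧ π i * π i = π i)
    (hcomm : ∀ i, i + 1 < N → π i * π (i + 1) = π (i + 1) * π i)
    (hcomm' : π (N - 1) * π 0 = π 0 * π (N - 1))
    (htr : ∀ i, i + 1 < N →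
      (π i * π (i + 1) * ρ).trace = (π i * ρ).trace ∧
      (π i * ρ).trace = (π (i + 1) * ρ).trace) :
    (π 0 * (1 - π (N - 1)) * ρ).trace = 0 :=
  no_symmetric_quantum_paradoxes_general N hN π ρ hρ hproj hcomm htr
end

section
/- Yablo's paradox (infinite case, as proved in Section 2.1): There is no function s : ℕ → Bool such that for every i ∈ ℕ, s i = true if and only if s j = false for all j > i. Equivalently, the infinite Yablo system of statements 'S_i: S_j is false for all j > i' admits no consistent Boolean truth-value assignment. -/
/-!
If some `S_i` were true, pick `k > i`: then `S_k` is false, yet every statement after `k` is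
also after `i`, hence false, which makes `S_k` true. So every statement is false; but then any
`S_i` is true, its successors all being false.
-/

section Yablo

variable {α : Type*} [Preorder α] [NoMaxOrder α] {P : α → Prop}

theorem not_of_yablo (h : ∀ i, P i ↔ ∀ j, i < j → ¬ P j) (i : α) : ¬ P i := by
  intro hi
  obtain ⟨k, hik⟩ := exists_gt i
  have later_false := (h i).mp hi
  exact later_false k hik <| (h k).mpr fun j hkj => later_false j (hik.trans hkj)

variable [Nonempty α]

theorem not_yablo : ¬ ∀ i, P i ↔ ∀ j, i < j → ¬ P j := by
  intro h
  obtain ⟨i⟩ := ‹Nonempty α›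
  exact not_of_yablo h i <| (h i).mpr fun j _ => not_of_yablo h j

end Yablo

/-- **Yablo's paradox** (infinite case, Section 2.1). There is no Boolean truth-value
assignment `s : ℕ → Bool` to the infinite Yablo chain of statements
`S_i : "S_j is false for all j > i"`. -/
theorem yablo_paradox :
    ¬ ∃ s : ℕ → Bool, ∀ i : ℕ, (s i = true ↔ ∀ j : ℕ, i < j → s j = false) := by
  rintro ⟨s, hs⟩
  exact not_yablo (P := fun i => s i = true) fun i => by simpa only [Bool.not_eq_true] using hs i
end

section
/- Logical contextuality of the Frauchiger–Renner/Hardy empirical model (instance of Theorem 15): There is no probability mass function p on Bool × Bool × Bool × Bool, with coordinates (a, b, u, w) and true encoding the outcomes 1 and 'ok', such that p({a = false and b = true}) = 0, p({a = true and w = true}) = 0, p({u = true and b = false}) = 0, and p({u = true and w = true}) = 1/12. Hence no global joint distribution reproduces the four pairwise Born-rule context distributions of the Frauchiger–Renner setup, whose values include P(a=0,b=1)=0, P(a=1,w=ok)=0, P(u=ok,b=0)=0 and P(u=ok,w=ok)=1/12. -/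
theorem prob_eq_zero_iff {α : Type*} {p : PMF α} {E : Set α} :
    prob p E = 0 ↔ ∀ x ∈ p.support, x ∉ E :=
  (PMF.toOuterMeasure_apply_eq_zero_iff p E).trans Set.disjoint_left

/-- Hardy's paradox: on the support, `u` forces `b`, `b` forces `a`, and `a` excludes `w`. -/
theorem prob_hardy_eq_zero {α : Type*} {p : PMF α} {a b u w : α → Bool}
    (hab : prob p {x | a x = false ∧ b x = true} = 0)
    (haw : prob p {x | a x = true ∧ w x = true} = 0)
    (hub : prob p {x | u x = true ∧ b x = false} = 0) :
    prob p {x | u x = true ∧ w x = true} = 0 := by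
  rw [prob_eq_zero_iff] at *
  rintro x hx ⟨hu, hw⟩
  have hb : b x = true := Bool.eq_true_of_not_eq_false fun hb => hub x hx ⟨hu, hb⟩
  have ha : a x = true := Bool.eq_true_of_not_eq_false fun ha => hab x hx ⟨ha, hb⟩
  exact haw x hx ⟨ha, hw⟩

/-- **Logical contextuality of the Frauchiger–Renner / Hardy empirical model**
(instance of Theorem 15).  The coordinates are `(a, b, u, w)`, with `true` encoding
the outcomes `1` and `ok`.  No global joint distribution satisfies
`P(a=0, b=1) = 0`, `P(a=1, w=ok) = 0`, `P(u=ok, b=0) = 0` and `P(u=ok, w=ok) = 1/12`. -/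
theorem fr_logically_contextual :
    ¬ ∃ p : PMF (Bool × Bool × Bool × Bool),
        prob p {x | x.1 = false ∧ x.2.1 = true} = 0 ∧
        prob p {x | x.1 = true ∧ x.2.2.2 = true} = 0 ∧
        prob p {x | x.2.2.1 = true ∧ x.2.1 = false} = 0 ∧
        prob p {x | x.2.2.1 = true ∧ x.2.2.2 = true} = 1 / 12 := by
  rintro ⟨p, hab, haw, hub, huw⟩
  have huw_zero := prob_hardy_eq_zero (a := Prod.fst) (b := fun x => x.2.1) hab haw hub
  rw [huw] at huw_zero
  norm_num at huw_zero
end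

section
/- Logical contextuality of the KCBS empirical model (instance of Theorem 15, Section 4.2): There is no probability mass function p on Bool⁵, with coordinates (a₁, a₂, a₃, a₄, a₅) and true encoding the outcome 1, such that p({a₂ = true and a₁ = true}) = 0, p({a₃ = false and a₂ = false}) = 0, p({a₄ = true and a₃ = true}) = 0, p({a₅ = false and a₄ = false}) = 0, and p({a₅ = false and a₁ = true}) = 1/9. Hence no global joint distribution reproduces the five pairwise Born-rule context probabilities of the KCBS 5-cycle model, whose values include P(a₂=1,a₁=1)=0, P(a₃=0,a₂=0)=0, P(a₄=1,a₃=1)=0, P(a₅=0,a₄=0)=0 and P(a₅=0,a₁=1)=1/9. -/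
open MeasureTheory

/-- Going round the cycle, `a₁ = 1` forces `a₂ = 0`, `a₃ = 1`, `a₄ = 0` and finally `a₅ = 1`
unless one of the four exclusivity events occurs. -/
lemma kcbs_target_subset_exclusions :
    {x : Bool × Bool × Bool × Bool × Bool | x.2.2.2.2 = false ∧ x.1 = true} ⊆
      {x | x.2.1 = true ∧ x.1 = true} ∪ {x | x.2.2.1 = false ∧ x.2.1 = false} ∪
        {x | x.2.2.2.1 = true ∧ x.2.2.1 = true} ∪
          {x | x.2.2.2.2 = false ∧ x.2.2.2.1 = false} := by
  rintro ⟨a₁, a₂, a₃, a₄, a₅⟩ ⟨rfl, rfl⟩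
  cases a₂ <;> cases a₃ <;> cases a₄ <;> simp

/-- **Logical contextuality of the KCBS empirical model** (instance of Theorem 15,
Section 4.2).  The coordinates are `(a₁, a₂, a₃, a₄, a₅)`, with `true` encoding the
outcome `1`.  No global joint distribution satisfies `P(a₂=1, a₁=1) = 0`,
`P(a₃=0, a₂=0) = 0`, `P(a₄=1, a₃=1) = 0`, `P(a₅=0, a₄=0) = 0` and
`P(a₅=0, a₁=1) = 1/9`. -/
theorem kcbs_logically_contextual :
    ¬ ∃ p : PMF (Bool × Bool × Bool × Bool × Bool),
        prob p {x | x.2.1 = true ∧ x.1 = true} = 0 ∧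
        prob p {x | x.2.2.1 = false ∧ x.2.1 = false} = 0 ∧
        prob p {x | x.2.2.2.1 = true ∧ x.2.2.1 = true} = 0 ∧
        prob p {x | x.2.2.2.2 = false ∧ x.2.2.2.1 = false} = 0 ∧
        prob p {x | x.2.2.2.2 = false ∧ x.1 = true} = 1 / 9 := by
  rintro ⟨p, h₁, h₂, h₃, h₄, h₅⟩
  have hnull : prob p {x | x.2.2.2.2 = false ∧ x.1 = true} = 0 :=
    measure_mono_null kcbs_target_subset_exclusions
      (measure_union_null (measure_union_null (measure_union_null h₁ h₂) h₃) h₄)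
  rw [h₅] at hnull
  norm_num at hnull
end
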